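/- arXiv:1402.1779 — 5 statements merged into one kernel-verified Lean document; each statement's English description precedes it below -/
import Mathlib

section
/- Let L be an n×n real matrix such that L_ii > 0 for all i, L_ij ≤ 0 for i ≠ j, every row sum of L is nonnegative, and for every nonempty subset S of indices the principal submatrix of L on S has at least one row whose entries sum to a strictly positive number. Then L is invertible and every entry of L⁻¹ is nonnegative. -/
/-!
Let `x` satisfy `L *ᵥ x ≥ 0` and suppose its minimum `m` is negative. Pick `i` in the set `S` where
the minimum is attained with `∑ j ∈ S, L i j > 0`. Writing
`(L *ᵥ x) i = m * ∑ j, L i j + ∑ j, L i j * (x j - m)`, both summands are nonpositive, so both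
vanish; the second forces `L i j = 0` off `S`, whence `∑ j, L i j > 0` and the first is negative.
Hence `L *ᵥ x ≥ 0` implies `x ≥ 0`. Applied to `±x` this makes `L` injective, and applied to the
columns of `L⁻¹` (which `L` maps to standard basis vectors) it makes `L⁻¹` entrywise nonnegative.
-/

open Finset Matrix

namespace Matrix

variable {ι R : Type*} [Fintype ι]

lemma mulVec_apply_eq_mul_sum_add_sum [CommRing R] (L : Matrix ι ι R) (x : ι → R) (m : R)
    (i : ι) : (L *ᵥ x) i = m * ∑ j, L i j + ∑ j, L i j * (x j - m) := by
  simp only [mulVec, dotProduct, mul_sub, sum_sub_distrib, mul_sum]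
  simp only [mul_comm m, add_sub_cancel]

theorem nonneg_of_mulVec_nonneg [CommRing R] [LinearOrder R] [IsStrictOrderedRing R]
    {L : Matrix ι ι R} (hoff : ∀ i j, i ≠ j → L i j ≤ 0) (hrow : ∀ i, 0 ≤ ∑ j, L i j)
    (hsub : ∀ S : Finset ι, S.Nonempty → ∃ i ∈ S, 0 < ∑ j ∈ S, L i j)
    {x : ι → R} (hx : 0 ≤ L *ᵥ x) : 0 ≤ x := by
  by_contra hneg
  obtain ⟨k, hk⟩ : ∃ k, x k < 0 := by simpa [Pi.le_def] using hneg
  have hne : (univ : Finset ι).Nonempty := ⟨k, mem_univ k⟩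
  set m := univ.inf' hne x
  have hmin : ∀ j, m ≤ x j := fun j => inf'_le x (mem_univ j)
  have hm : m < 0 := (hmin k).trans_lt hk
  set S : Finset ι := {j | x j = m}
  have hS : S.Nonempty := by
    obtain ⟨j, -, hj⟩ := exists_mem_eq_inf' hne x
    exact ⟨j, by simp [S, m, hj]⟩
  obtain ⟨i, hiS, hpos⟩ := hsub S hS
  have hterm : ∀ j, L i j * (x j - m) ≤ 0 := fun j => by
    rcases eq_or_ne i j with rfl | hij
    · simp [(mem_filter.1 hiS).2]
    · exact mul_nonpos_of_nonpos_of_nonneg (hoff i j hij) (sub_nonneg.2 (hmin j))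
  have hrest : ∑ j, L i j * (x j - m) = 0 := by
    have := hx i
    rw [Pi.zero_apply, mulVec_apply_eq_mul_sum_add_sum L x m i] at this
    linarith [sum_nonpos fun j (_ : j ∈ univ) => hterm j, mul_nonpos_of_nonpos_of_nonneg hm.le (hrow i)]
  have hoffS : ∀ j ∉ S, L i j = 0 := fun j hj => by
    have := (sum_eq_zero_iff_of_nonpos fun j _ => hterm j).1 hrest j (mem_univ j)
    exact (mul_eq_zero.1 this).resolve_right (sub_ne_zero.2 fun h => hj (by simp [S, h]))
  have hrowS : ∑ j ∈ S, L i j = ∑ j, L i j :=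
    sum_subset (subset_univ S) fun j _ hj => hoffS j hj
  have := hx i
  rw [Pi.zero_apply, mulVec_apply_eq_mul_sum_add_sum L x m i, hrest, ← hrowS] at this
  linarith [mul_neg_of_neg_of_pos hm hpos]

variable [Field R] [LinearOrder R] [IsStrictOrderedRing R] [DecidableEq ι] {L : Matrix ι ι R}

theorem isUnit_of_mulVec_nonneg_imp_nonneg (hL : ∀ x, 0 ≤ L *ᵥ x → 0 ≤ x) : IsUnit L := by
  refine mulVec_injective_iff_isUnit.1 fun x y hxy => ?_
  have hzero : L *ᵥ (x - y) = 0 := by rw [mulVec_sub, hxy, sub_self]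
  have hle := hL (x - y) hzero.ge
  have hge := hL (-(x - y)) (by rw [mulVec_neg, hzero, neg_zero])
  exact sub_eq_zero.1 (le_antisymm (neg_nonneg.1 hge) hle)

theorem inv_nonneg_of_mulVec_nonneg_imp_nonneg (hL : ∀ x, 0 ≤ L *ᵥ x → 0 ≤ x) (i j : ι) :
    0 ≤ L⁻¹ i j := by
  have hdet : IsUnit L.det := (isUnit_iff_isUnit_det L).1 (isUnit_of_mulVec_nonneg_imp_nonneg hL)
  have hcol : L *ᵥ (L⁻¹ *ᵥ Pi.single j 1) = Pi.single j 1 := by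
    rw [mulVec_mulVec, mul_nonsing_inv L hdet, one_mulVec]
  have := hL _ (hcol ▸ Pi.single_nonneg.2 zero_le_one) i
  simpa [mulVec_single_one] using this

end Matrix

theorem stmt0_general {n : ℕ} (L : Matrix (Fin n) (Fin n) ℝ)
    (hoff : ∀ i j, i ≠ j → L i j ≤ 0)
    (hrow : ∀ i, 0 ≤ ∑ j, L i j)
    (hsub : ∀ S : Finset (Fin n), S.Nonempty → ∃ i ∈ S, 0 < ∑ j ∈ S, L i j) :
    IsUnit L ∧ ∀ i j, 0 ≤ L⁻¹ i j := by
  have hL : ∀ x, 0 ≤ L *ᵥ x → 0 ≤ x := fun _ => Matrix.nonneg_of_mulVec_nonneg hoff hrow hsub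
  exact ⟨Matrix.isUnit_of_mulVec_nonneg_imp_nonneg hL,
    Matrix.inv_nonneg_of_mulVec_nonneg_imp_nonneg hL⟩

theorem stmt0 {n : ℕ} (L : Matrix (Fin n) (Fin n) ℝ)
    (hdiag : ∀ i, 0 < L i i)
    (hoff : ∀ i j, i ≠ j → L i j ≤ 0)
    (hrow : ∀ i, 0 ≤ ∑ j, L i j)
    (hsub : ∀ S : Finset (Fin n), S.Nonempty → ∃ i ∈ S, 0 < ∑ j ∈ S, L i j) :
    IsUnit L ∧ ∀ i j, 0 ≤ L⁻¹ i j :=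
  stmt0_general L hoff hrow hsub
end

section
/- Let L be an n×n real matrix with positive diagonal entries, nonpositive off-diagonal entries, nonnegative row sums, and such that every principal submatrix has a row with strictly positive sum. Then the vector L⁻¹·(1,1,...,1)ᵀ has all entries strictly positive. -/
open Finset Matrix

/-- Key lemma: if `x i = M` is the maximal absolute value and `L.mulVec x = 0`,
then the sum of row `i` over the set where `|x j| = M` is nonpositive. -/
lemma aux_rowsum {n : ℕ} (L : Matrix (Fin n) (Fin n) ℝ)
    (hoff : ∀ i j, i ≠ j → L i j ≤ 0)
    (hrow : ∀ i, 0 ≤ ∑ j, L i j)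
    (x : Fin n → ℝ) (M : ℝ) (hM : 0 < M) (i : Fin n)
    (hbd : ∀ j, |x j| ≤ M) (hLx : L.mulVec x = 0) (hxi : x i = M) :
    ∑ j ∈ Finset.univ.filter (fun j => |x j| = M), L i j ≤ 0 := by
  set S := Finset.univ.filter (fun j => |x j| = M) with hS
  have hterm : ∀ j, 0 ≤ L i j * (x j - M) := by
    intro j
    by_cases hji : j = i
    · subst hji; rw [hxi]; simp
    · have h1 : L i j ≤ 0 := hoff i j (Ne.symm hji)
      have h2 : x j - M ≤ 0 := by
        have := (abs_le.mp (hbd j)).2; linarith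
      nlinarith
  have hsum0 : ∑ j, L i j * x j = 0 := by
    have := congrFun hLx i
    simpa [Matrix.mulVec, dotProduct] using this
  have hsumf : ∑ j, L i j * (x j - M) = - (M * ∑ j, L i j) := by
    simp only [mul_sub]
    rw [Finset.sum_sub_distrib, hsum0, ← Finset.sum_mul]
    ring
  have hsumf_nonneg : 0 ≤ ∑ j, L i j * (x j - M) :=
    Finset.sum_nonneg fun j _ => hterm j
  have hrow0 : ∑ j, L i j = 0 := by
    have h1 : 0 ≤ ∑ j, L i j := hrow i
    nlinarith [hsumf_nonneg]
  have hsumf0 : ∑ j, L i j * (x j - M) = 0 := by rw [hsumf, hrow0]; ring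
  have heach : ∀ j ∈ Finset.univ, L i j * (x j - M) = 0 :=
    (Finset.sum_eq_zero_iff_of_nonneg (fun j _ => hterm j)).mp hsumf0
  have hout : ∀ j ∉ S, L i j = 0 := by
    intro j hj
    have hjne : |x j| ≠ M := by
      intro h; exact hj (Finset.mem_filter.mpr ⟨Finset.mem_univ j, h⟩)
    have hxjM : x j - M ≠ 0 := by
      intro h
      have : x j = M := by linarith
      exact hjne (by rw [this]; exact abs_of_pos hM)
    have := heach j (Finset.mem_univ j)
    rcases mul_eq_zero.mp this with h | h
    · exact h
    · exact absurd h hxjM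
  have : ∑ j ∈ S, L i j = ∑ j, L i j := by
    rw [← Finset.sum_filter_add_sum_filter_not Finset.univ (fun j => |x j| = M) (fun j => L i j)]
    have : ∑ j ∈ Finset.univ.filter (fun j => ¬ |x j| = M), L i j = 0 := by
      apply Finset.sum_eq_zero
      intro j hj
      apply hout
      simp only [hS, Finset.mem_filter, Finset.mem_univ, true_and]
      exact (Finset.mem_filter.mp hj).2
    rw [this, add_zero]
  rw [this, hrow0]

lemma aux_inj {n : ℕ} (L : Matrix (Fin n) (Fin n) ℝ)
    (hoff : ∀ i j, i ≠ j → L i j ≤ 0)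
    (hrow : ∀ i, 0 ≤ ∑ j, L i j)
    (hsub : ∀ S : Finset (Fin n), S.Nonempty → ∃ i ∈ S, 0 < ∑ j ∈ S, L i j)
    (x : Fin n → ℝ) (hLx : L.mulVec x = 0) : x = 0 := by
  by_contra hx
  have hne : ∃ j, x j ≠ 0 := by
    by_contra h
    push_neg at h
    exact hx (funext h)
  obtain ⟨j0, hj0⟩ := hne
  have hnonempty : (Finset.univ : Finset (Fin n)).Nonempty := ⟨j0, Finset.mem_univ j0⟩
  set M := Finset.univ.sup' hnonempty (fun j => |x j|) with hMdef
  have hM : 0 < M := lt_of_lt_of_le (abs_pos.mpr hj0)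
    (Finset.le_sup' (fun j => |x j|) (Finset.mem_univ j0))
  have hbd : ∀ j, |x j| ≤ M := fun j => Finset.le_sup' (fun j => |x j|) (Finset.mem_univ j)
  set S := Finset.univ.filter (fun j => |x j| = M) with hS
  have hSne : S.Nonempty := by
    obtain ⟨j, hj, hje⟩ := Finset.exists_mem_eq_sup' hnonempty (fun j => |x j|)
    exact ⟨j, Finset.mem_filter.mpr ⟨Finset.mem_univ j, hje.symm⟩⟩
  obtain ⟨i, hiS, hpos⟩ := hsub S hSne
  have hxi : |x i| = M := (Finset.mem_filter.mp hiS).2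
  rcases abs_eq (le_of_lt hM) |>.mp hxi with h | h
  · have := aux_rowsum L hoff hrow x M hM i hbd hLx h
    rw [← hS] at this
    linarith
  · have hLx' : L.mulVec (-x) = 0 := by rw [Matrix.mulVec_neg, hLx]; simp
    have hbd' : ∀ j, |(-x) j| ≤ M := by intro j; simpa using hbd j
    have hxi' : (-x) i = M := by simp [h]
    have := aux_rowsum L hoff hrow (-x) M hM i hbd' hLx' hxi'
    have hSeq : Finset.univ.filter (fun j => |(-x) j| = M) = S := by
      ext j; simp [hS]
    rw [hSeq] at this
    linarith

theorem stmt1 {n : ℕ} (L : Matrix (Fin n) (Fin n) ℝ)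
    (hdiag : ∀ i, 0 < L i i)
    (hoff : ∀ i j, i ≠ j → L i j ≤ 0)
    (hrow : ∀ i, 0 ≤ ∑ j, L i j)
    (hsub : ∀ S : Finset (Fin n), S.Nonempty → ∃ i ∈ S, 0 < ∑ j ∈ S, L i j) :
    ∀ i, 0 < (L⁻¹.mulVec (fun _ => (1 : ℝ))) i := by
  have hinj : Function.Injective L.mulVec := by
    intro a b hab
    have h0 : L.mulVec (a - b) = 0 := by
      rw [Matrix.mulVec_sub, hab, sub_self]
    have := aux_inj L hoff hrow hsub (a - b) h0
    exact sub_eq_zero.mp this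
  have hUnit : IsUnit L := Matrix.mulVec_injective_iff_isUnit.mp hinj
  have hdet : IsUnit L.det := (Matrix.isUnit_iff_isUnit_det L).mp hUnit
  set x := L⁻¹.mulVec (fun _ => (1 : ℝ)) with hx
  have hLx : L.mulVec x = fun _ => (1 : ℝ) := by
    rw [hx, Matrix.mulVec_mulVec, Matrix.mul_nonsing_inv L hdet, Matrix.one_mulVec]
  intro i
  -- find the minimum entry of x
  obtain ⟨i0, _, hmin⟩ := Finset.exists_min_image Finset.univ x ⟨i, Finset.mem_univ i⟩
  by_cases hpos : 0 < x i0
  · exact lt_of_lt_of_le hpos (hmin i (Finset.mem_univ i))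
  · exfalso
    push_neg at hpos
    have h1 : ∑ j, L i0 j * x j = 1 := by
      have := congrFun hLx i0
      simpa [Matrix.mulVec, dotProduct] using this
    have hterm : ∀ j, L i0 j * x j ≤ L i0 j * x i0 := by
      intro j
      by_cases hji : j = i0
      · subst hji; exact le_refl _
      · have hL : L i0 j ≤ 0 := hoff i0 j (Ne.symm hji)
        have hxj : x i0 ≤ x j := hmin j (Finset.mem_univ j)
        exact mul_le_mul_of_nonpos_left hxj hL
    have hsum : ∑ j, L i0 j * x j ≤ x i0 * ∑ j, L i0 j := by
      rw [Finset.mul_sum]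
      apply Finset.sum_le_sum
      intro j _
      calc L i0 j * x j ≤ L i0 j * x i0 := hterm j
        _ = x i0 * L i0 j := by ring
    have : x i0 * ∑ j, L i0 j ≤ 0 :=
      mul_nonpos_of_nonpos_of_nonneg hpos (hrow i0)
    linarith
end

section
/- Let G be a finite simple graph on n vertices with Laplacian characteristic polynomial p(t) = det(L_G - tI). Let G* be the graph obtained from G by adding one new vertex adjacent to all n vertices of G. Then the Laplacian characteristic polynomial of G* equals -t(n+1-t)·p(t-1)/(1-t). -/
/-- The Laplacian matrix of the cone (star) `G*` over a graph `G` on `n` vertices: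
a new vertex (indexed by `Sum.inr`) is joined to every vertex of `G`. -/
def coneLap {n : ℕ} (G : SimpleGraph (Fin n)) [DecidableRel G.Adj] :
    Matrix (Fin n ⊕ Unit) (Fin n ⊕ Unit) ℝ
  | Sum.inl i, Sum.inl j => G.lapMatrix ℝ i j + (if i = j then 1 else 0)
  | Sum.inl _, Sum.inr _ => -1
  | Sum.inr _, Sum.inl _ => -1
  | Sum.inr _, Sum.inr _ => (n : ℝ)

lemma lap_row_sum {n : ℕ} (G : SimpleGraph (Fin n)) [DecidableRel G.Adj] (i : Fin n) :
    ∑ j, G.lapMatrix ℝ i j = 0 := by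
  have h := congrFun (G.lapMatrix_mulVec_const_eq_zero (R := ℝ)) i
  simpa [Matrix.mulVec, dotProduct] using h

lemma lap_col_sum {n : ℕ} (G : SimpleGraph (Fin n)) [DecidableRel G.Adj] (i : Fin n) :
    ∑ j, G.lapMatrix ℝ j i = 0 := by
  have hs : ∑ j, G.lapMatrix ℝ j i = ∑ j, G.lapMatrix ℝ i j :=
    Finset.sum_congr rfl fun j _ => (G.isSymm_lapMatrix (R := ℝ)).apply i j
  rw [hs, lap_row_sum]

lemma fromBlocks_eq {α : Type*} {m n m' n' : Type*} {A A' : Matrix m m' α} {B B' : Matrix m n' α}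
    {C C' : Matrix n m' α} {D D' : Matrix n n' α} (hA : A = A') (hB : B = B') (hC : C = C')
    (hD : D = D') : Matrix.fromBlocks A B C D = Matrix.fromBlocks A' B' C' D' := by
  rw [hA, hB, hC, hD]

theorem stmt11 {n : ℕ} (G : SimpleGraph (Fin n)) [DecidableRel G.Adj] :
    ∀ t : ℝ, (1 - t) * (coneLap G - t • 1).det
      = -t * ((n : ℝ) + 1 - t) * (G.lapMatrix ℝ - (t - 1) • 1).det := by
  intro t
  set A : Matrix (Fin n) (Fin n) ℝ := G.lapMatrix ℝ - (t - 1) • 1 with hA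
  set j : Matrix (Fin n) Unit ℝ := Matrix.of fun _ _ => (1 : ℝ) with hj
  set jT : Matrix Unit (Fin n) ℝ := Matrix.of fun _ _ => (1 : ℝ) with hjT
  -- key multiplication facts
  have hAj : A * j = (1 - t) • j := by
    ext i u
    simp only [hA, hj, Matrix.mul_apply, Matrix.sub_apply, Matrix.smul_apply,
      Matrix.one_apply, Matrix.of_apply, mul_one, smul_eq_mul]
    have key : ∀ x, G.lapMatrix ℝ i x - (t - 1) * (if i = x then 1 else 0)
        = G.lapMatrix ℝ i x + (if i = x then (1 - t) else 0) := by
      intro x; split <;> ring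
    simp_rw [key, Finset.sum_add_distrib, lap_row_sum G i, Finset.sum_ite_eq]
    simp
  have hjTA : jT * A = (1 - t) • jT := by
    ext u i
    simp only [hA, hjT, Matrix.mul_apply, Matrix.sub_apply, Matrix.smul_apply,
      Matrix.one_apply, Matrix.of_apply, one_mul, smul_eq_mul]
    have key : ∀ x, G.lapMatrix ℝ x i - (t - 1) * (if x = i then 1 else 0)
        = G.lapMatrix ℝ x i + (if x = i then (1 - t) else 0) := by
      intro x; split <;> ring
    simp_rw [key, Finset.sum_add_distrib, lap_col_sum G i, Finset.sum_ite_eq']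
    simp
  have hjTj : jT * j = (n : ℝ) • (1 : Matrix Unit Unit ℝ) := by
    ext u v
    simp [hj, hjT, Matrix.mul_apply, Matrix.one_apply]
  -- the cone Laplacian shifted, as a block matrix
  have hM : coneLap G - t • (1 : Matrix (Fin n ⊕ Unit) (Fin n ⊕ Unit) ℝ)
      = Matrix.fromBlocks A (-j) (-jT) (((n : ℝ) - t) • 1) := by
    ext a b
    cases a <;> cases b <;>
      simp [coneLap, hA, hj, hjT, Matrix.fromBlocks, Matrix.one_apply, Matrix.sub_apply,
        Matrix.smul_apply] <;>
      split <;> ring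
  set P : Matrix (Fin n ⊕ Unit) (Fin n ⊕ Unit) ℝ := Matrix.fromBlocks 1 0 jT 1 with hP
  set Q : Matrix (Fin n ⊕ Unit) (Fin n ⊕ Unit) ℝ := Matrix.fromBlocks 1 j 0 1 with hQ
  set N : Matrix (Fin n ⊕ Unit) (Fin n ⊕ Unit) ℝ :=
    Matrix.fromBlocks A j ((-t) • jT) (((n : ℝ) + 1) • 1) with hN
  set D : Matrix (Fin n ⊕ Unit) (Fin n ⊕ Unit) ℝ :=
    Matrix.fromBlocks 1 0 0 ((-t) • 1) with hD
  set Q' : Matrix (Fin n ⊕ Unit) (Fin n ⊕ Unit) ℝ :=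
    Matrix.fromBlocks 1 (-j) 0 ((1 - t) • 1) with hQ'
  set F : Matrix (Fin n ⊕ Unit) (Fin n ⊕ Unit) ℝ :=
    Matrix.fromBlocks A 0 ((-t) • jT) (((n : ℝ) + 1 - t) • 1) with hF
  have eq1 : P * (coneLap G - t • 1) * Q = N * D := by
    rw [hM, hP, hQ, hN, hD, Matrix.fromBlocks_multiply, Matrix.fromBlocks_multiply,
      Matrix.fromBlocks_multiply]
    apply fromBlocks_eq
    · simp
    · simp [hAj, hjTj, Matrix.mul_smul, Matrix.smul_mul, Matrix.mul_neg, Matrix.neg_mul,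
        smul_smul, Matrix.add_mul]
      try module
    · simp only [Matrix.one_mul, Matrix.mul_one, Matrix.mul_zero, Matrix.zero_mul,
        add_zero, zero_add, hjTA]
      module
    · simp [hAj, hjTA, hjTj, Matrix.mul_smul, Matrix.smul_mul, Matrix.mul_neg, Matrix.neg_mul,
        smul_smul, Matrix.add_mul]
      try module
  have eq2 : N * Q' = F := by
    rw [hN, hQ', hF, Matrix.fromBlocks_multiply]
    apply fromBlocks_eq
    · simp
    · simp [hAj, Matrix.mul_smul, Matrix.smul_mul, Matrix.mul_neg, Matrix.neg_mul, smul_smul]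
      try module
    · simp
    · simp [hjTj, Matrix.mul_smul, Matrix.smul_mul, Matrix.mul_neg, Matrix.neg_mul, smul_smul]
      try module
  have detP : P.det = 1 := by
    rw [hP, Matrix.det_fromBlocks_zero₁₂]; simp
  have detQ : Q.det = 1 := by
    rw [hQ, Matrix.det_fromBlocks_zero₂₁]; simp
  have detD : D.det = -t := by
    rw [hD, Matrix.det_fromBlocks_zero₁₂]
    simp [Matrix.det_unique, Matrix.one_apply]
  have detQ' : Q'.det = 1 - t := by
    rw [hQ', Matrix.det_fromBlocks_zero₂₁]
    simp [Matrix.det_unique, Matrix.one_apply]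
  have detF : F.det = A.det * ((n : ℝ) + 1 - t) := by
    rw [hF, Matrix.det_fromBlocks_zero₁₂]
    simp [Matrix.det_unique, Matrix.one_apply]
  have hm1 : (coneLap G - t • 1).det = -t * N.det := by
    have := congrArg Matrix.det eq1
    rw [Matrix.det_mul, Matrix.det_mul, Matrix.det_mul, detP, detQ, detD] at this
    linarith [this]
  have hm2 : (1 - t) * N.det = ((n : ℝ) + 1 - t) * A.det := by
    have := congrArg Matrix.det eq2
    rw [Matrix.det_mul, detQ', detF] at this
    linarith [this]
  rw [hm1]
  linear_combination (-t) * hm2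
end

section
/- Let G be a finite connected simple graph on n ≥ 2 vertices with Laplacian L, and let I be a nonempty proper subset of {1,...,n}. Then there exists a unique vector u ∈ ℝⁿ with u_i = 0 for i ∈ I, u_i > 0 for i ∉ I, such that (Lu)_i = 1 for all i ∉ I. -/
open Matrix Finset

/-- Kernel lemma: a vector vanishing on `I` whose Laplacian image vanishes off `I`
is identically zero, when `G` is connected and `I` is nonempty. -/
lemma lap_ker_zero {n : ℕ} (G : SimpleGraph (Fin n)) [DecidableRel G.Adj]
    (hconn : G.Connected) (I : Finset (Fin n)) (hI : I.Nonempty) (x : Fin n → ℝ)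
    (h0 : ∀ i ∈ I, x i = 0) (hL : ∀ i ∉ I, ((G.lapMatrix ℝ).mulVec x) i = 0) :
    x = 0 := by
  have hq : Matrix.toLinearMap₂' ℝ (G.lapMatrix ℝ) x x = 0 := by
    rw [Matrix.toLinearMap₂'_apply', dotProduct]
    refine Finset.sum_eq_zero fun i _ => ?_
    by_cases h : i ∈ I
    · rw [h0 i h, zero_mul]
    · rw [hL i h, mul_zero]
  have hc := (G.lapMatrix_toLinearMap₂'_apply'_eq_zero_iff_forall_reachable x).mp hq
  obtain ⟨i₀, hi₀⟩ := hI
  funext j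
  rw [hc j i₀ (hconn.preconnected j i₀), h0 i₀ hi₀, Pi.zero_apply]

/-- Maximum principle: at a global minimizer outside `I`, `(Lu)_i ≤ 0`. -/
lemma lap_min_le_zero {n : ℕ} (G : SimpleGraph (Fin n)) [DecidableRel G.Adj]
    (u : Fin n → ℝ) (i₀ : Fin n) (hmin : ∀ j, u i₀ ≤ u j) :
    ((G.lapMatrix ℝ).mulVec u) i₀ ≤ 0 := by
  rw [SimpleGraph.lapMatrix_mulVec_apply]
  have hdeg : (G.degree i₀ : ℝ) * u i₀ = ∑ j ∈ G.neighborFinset i₀, u i₀ := by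
    rw [Finset.sum_const, SimpleGraph.card_neighborFinset_eq_degree, nsmul_eq_mul]
  rw [hdeg, ← Finset.sum_sub_distrib]
  exact Finset.sum_nonpos fun j _ => sub_nonpos.mpr (hmin j)

theorem stmt15 {n : ℕ} (hn : 2 ≤ n) (G : SimpleGraph (Fin n)) [DecidableRel G.Adj]
    (hconn : G.Connected) (I : Finset (Fin n)) (hI : I.Nonempty) (hI' : I ≠ Finset.univ) :
    ∃! u : Fin n → ℝ,
      (∀ i ∈ I, u i = 0) ∧ (∀ i ∉ I, 0 < u i) ∧
        (∀ i ∉ I, ((G.lapMatrix ℝ).mulVec u) i = 1) := by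
  classical
  set L := G.lapMatrix ℝ with hLdef
  -- the grounded operator
  let T : (Fin n → ℝ) →ₗ[ℝ] (Fin n → ℝ) :=
    { toFun := fun x i => if i ∈ I then x i else
        (L.mulVec (fun j => if j ∈ I then 0 else x j)) i
      map_add' := by
        intro x y
        funext i
        have h : (fun j => if j ∈ I then (0:ℝ) else x j + y j)
            = (fun j => if j ∈ I then (0:ℝ) else x j)
              + (fun j => if j ∈ I then (0:ℝ) else y j) := by
          funext j; by_cases h : j ∈ I <;> simp [h]
        by_cases h' : i ∈ I
        · simp [h']
        · simp only [Pi.add_apply, if_neg h']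
          rw [h, Matrix.mulVec_add, Pi.add_apply]
      map_smul' := by
        intro c x
        funext i
        have h : (fun j => if j ∈ I then (0:ℝ) else c * x j)
            = c • (fun j => if j ∈ I then (0:ℝ) else x j) := by
          funext j; by_cases h : j ∈ I <;> simp [h]
        by_cases h' : i ∈ I
        · simp [h']
        · simp only [Pi.smul_apply, smul_eq_mul, if_neg h', RingHom.id_apply]
          rw [h, Matrix.mulVec_smul, Pi.smul_apply, smul_eq_mul] }
  have hTinj : Function.Injective T := by
    rw [← LinearMap.ker_eq_bot, LinearMap.ker_eq_bot']
    intro x hx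
    have hx' : ∀ i, (if i ∈ I then x i else
        (L.mulVec (fun j => if j ∈ I then 0 else x j)) i) = 0 := fun i =>
      congrFun hx i
    have h0 : ∀ i ∈ I, x i = 0 := by
      intro i hi; have := hx' i; simpa [hi] using this
    have hxeq : (fun j => if j ∈ I then (0:ℝ) else x j) = x := by
      funext j; by_cases h : j ∈ I
      · simp [h, h0 j h]
      · simp [h]
    have := lap_ker_zero G hconn I hI x h0 (fun i hi => by
      have := hx' i; rw [hxeq] at this; simpa [hi] using this)
    exact this
  have hTsurj : Function.Surjective T :=
    (LinearMap.injective_iff_surjective).mp hTinj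
  obtain ⟨v, hv⟩ := hTsurj (fun i => if i ∈ I then 0 else 1)
  set u : Fin n → ℝ := fun j => if j ∈ I then 0 else v j with hu
  have hu0 : ∀ i ∈ I, u i = 0 := fun i hi => by simp [hu, hi]
  have hu1 : ∀ i ∉ I, (L.mulVec u) i = 1 := by
    intro i hi
    have := congrFun hv i
    simp only [T, LinearMap.coe_mk, AddHom.coe_mk] at this
    rw [if_neg hi, if_neg hi] at this
    exact this
  -- positivity
  have hpos : ∀ u : Fin n → ℝ, (∀ i ∈ I, u i = 0) →
      (∀ i ∉ I, (L.mulVec u) i = 1) → ∀ i ∉ I, 0 < u i := by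
    intro u hu0 hu1 i hi
    obtain ⟨i₀, -, hmin⟩ := Finset.exists_min_image Finset.univ u ⟨i, Finset.mem_univ i⟩
    have hmin' : ∀ j, u i₀ ≤ u j := fun j => hmin j (Finset.mem_univ j)
    have hi₀I : i₀ ∈ I := by
      by_contra h
      have h1 := hu1 i₀ h
      have h2 := lap_min_le_zero G u i₀ hmin'
      rw [h1] at h2; linarith
    have hmin0 : u i₀ = 0 := hu0 i₀ hi₀I
    rcases lt_or_eq_of_le (hmin0 ▸ hmin' i) with h | h
    · exact h
    · exfalso
      have hmin'' : ∀ j, u i ≤ u j := fun j => by rw [← h, ← hmin0]; exact hmin' j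
      have h1 := hu1 i hi
      have h2 := lap_min_le_zero G u i hmin''
      rw [h1] at h2; linarith
  refine ⟨u, ⟨hu0, hpos u hu0 hu1, hu1⟩, ?_⟩
  rintro w ⟨hw0, -, hw1⟩
  have hdiff : w - u = 0 := by
    apply lap_ker_zero G hconn I hI
    · intro i hi; simp [hw0 i hi, hu0 i hi]
    · intro i hi
      rw [Matrix.mulVec_sub, Pi.sub_apply, hw1 i hi, hu1 i hi, sub_self]
  have := sub_eq_zero.mp hdiff
  exact this
end

section
/- Let G be a finite connected simple graph on n ≥ 2 vertices with Laplacian L, and I a nonempty proper subset of {1,...,n}. Then there exist a unique vector u ∈ ℝⁿ with u_i = 0 for i ∈ I and u_i > 0 for i ∉ I, and a unique vector b ∈ ℝⁿ with b_i = 0 for i ∉ I, such that Lu + b = χ_{\{u>0\}}, where χ_{\{u>0\}} is the 0/1 vector with i-th entry 1 exactly when u_i > 0. -/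
open Finset Matrix

/-- Uniqueness for the Dirichlet problem: a function vanishing on a nonempty set `I`
whose Laplacian vanishes off `I` is zero (for connected `G`). -/
lemma stmt16_dirichlet_unique {n : ℕ} (G : SimpleGraph (Fin n)) [DecidableRel G.Adj]
    (hconn : G.Connected) (I : Finset (Fin n)) (hI : I.Nonempty) (w : Fin n → ℝ)
    (h0 : ∀ i ∈ I, w i = 0) (hL : ∀ i ∉ I, ((G.lapMatrix ℝ).mulVec w) i = 0) : w = 0 := by
  have hq : Matrix.toLinearMap₂' ℝ (G.lapMatrix ℝ) w w = 0 := by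
    rw [Matrix.toLinearMap₂'_apply']
    rw [dotProduct]
    apply Finset.sum_eq_zero
    intro i _
    by_cases hi : i ∈ I
    · rw [h0 i hi, zero_mul]
    · rw [hL i hi, mul_zero]
  rw [G.lapMatrix_toLinearMap₂'_apply'_eq_zero_iff_forall_reachable] at hq
  obtain ⟨i₀, hi₀⟩ := hI
  funext i
  have := hq i i₀ (hconn i i₀)
  simp [this, h0 i₀ hi₀]

/-- Positivity (minimum principle): a function vanishing on `I` whose Laplacian is `1`
off `I` is positive off `I`. -/
lemma stmt16_pos {n : ℕ} (G : SimpleGraph (Fin n)) [DecidableRel G.Adj]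
    (I : Finset (Fin n)) (u : Fin n → ℝ)
    (h0 : ∀ i ∈ I, u i = 0) (hL : ∀ i ∉ I, ((G.lapMatrix ℝ).mulVec u) i = 1) :
    ∀ i ∉ I, 0 < u i := by
  intro i hi
  have hne : (Iᶜ : Finset (Fin n)).Nonempty := ⟨i, Finset.mem_compl.mpr hi⟩
  obtain ⟨i₀, hi₀mem, hi₀min⟩ := Finset.exists_min_image (Iᶜ : Finset (Fin n)) u hne
  have hi₀ : i₀ ∉ I := Finset.mem_compl.mp hi₀mem
  have hpos : 0 < u i₀ := by
    by_contra hle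
    push_neg at hle
    have h1 : ((G.lapMatrix ℝ).mulVec u) i₀ = 1 := hL i₀ hi₀
    rw [G.lapMatrix_mulVec_apply] at h1
    have hdeg : (G.degree i₀ : ℝ) * u i₀ = ∑ j ∈ G.neighborFinset i₀, u i₀ := by
      rw [Finset.sum_const, SimpleGraph.card_neighborFinset_eq_degree, nsmul_eq_mul]
    rw [hdeg, ← Finset.sum_sub_distrib] at h1
    have hnonpos : ∑ j ∈ G.neighborFinset i₀, (u i₀ - u j) ≤ 0 := by
      apply Finset.sum_nonpos
      intro j _
      by_cases hj : j ∈ I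
      · rw [h0 j hj]; simpa using hle
      · have := hi₀min j (Finset.mem_compl.mpr hj)
        linarith
    linarith
  calc 0 < u i₀ := hpos
    _ ≤ u i := hi₀min i (Finset.mem_compl.mpr hi)

theorem stmt16 {n : ℕ} (hn : 2 ≤ n) (G : SimpleGraph (Fin n)) [DecidableRel G.Adj]
    (hconn : G.Connected) (I : Finset (Fin n)) (hI : I.Nonempty) (hI' : I ≠ Finset.univ) :
    ∃! p : (Fin n → ℝ) × (Fin n → ℝ),
      (∀ i ∈ I, p.1 i = 0) ∧ (∀ i ∉ I, 0 < p.1 i) ∧ (∀ i ∉ I, p.2 i = 0) ∧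
        (∀ i, ((G.lapMatrix ℝ).mulVec p.1) i + p.2 i = if 0 < p.1 i then 1 else 0) := by
  classical
  set J := {i : Fin n // i ∉ I}
  -- extension by zero, as a linear map
  let ext : (J → ℝ) →ₗ[ℝ] (Fin n → ℝ) :=
    { toFun := fun v i => if h : i ∉ I then v ⟨i, h⟩ else 0
      map_add' := by intro v w; funext i; by_cases h : i ∈ I <;> simp [h]
      map_smul' := by intro c v; funext i; by_cases h : i ∈ I <;> simp [h] }
  -- the Dirichlet operator
  let T : (J → ℝ) →ₗ[ℝ] (J → ℝ) :=
    (LinearMap.funLeft ℝ ℝ (Subtype.val)).comp (((G.lapMatrix ℝ).mulVecLin).comp ext)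
  have hext0 : ∀ (v : J → ℝ) (i : Fin n), i ∈ I → ext v i = 0 := by
    intro v i hi; simp only [ext, LinearMap.coe_mk, AddHom.coe_mk]; rw [dif_neg (by simpa using hi)]
  have hTinj : Function.Injective T := by
    rw [← LinearMap.ker_eq_bot, LinearMap.ker_eq_bot']
    intro v hv
    have hevz : ext v = 0 := by
      apply stmt16_dirichlet_unique G hconn I hI
      · intro i hi; exact hext0 v i hi
      · intro i hi
        have := congrFun hv ⟨i, hi⟩
        simpa [T] using this
    funext j
    have := congrFun hevz j.1
    simpa [ext, j.2] using this
  have hTsurj : Function.Surjective T := LinearMap.surjective_of_injective hTinj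
  obtain ⟨v, hv⟩ := hTsurj (fun _ => 1)
  set u : Fin n → ℝ := ext v with hu
  have hu0 : ∀ i ∈ I, u i = 0 := fun i hi => hext0 v i hi
  have huL : ∀ i ∉ I, ((G.lapMatrix ℝ).mulVec u) i = 1 := by
    intro i hi
    have := congrFun hv ⟨i, hi⟩
    simpa [T] using this
  have hupos : ∀ i ∉ I, 0 < u i := stmt16_pos G I u hu0 huL
  set b : Fin n → ℝ := fun i => if i ∈ I then -((G.lapMatrix ℝ).mulVec u) i else 0 with hb
  refine ⟨(u, b), ⟨hu0, hupos, ?_, ?_⟩, ?_⟩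
  · intro i hi; simp [b, hi]
  · intro i
    by_cases hi : i ∈ I
    · have h1 : ¬ 0 < u i := by rw [hu0 i hi]; exact lt_irrefl 0
      simp [b, hi, h1]
    · have h1 : 0 < u i := hupos i hi
      simp [b, hi, h1, huL i hi]
  · rintro ⟨u', b'⟩ ⟨h0', hpos', hb', heq'⟩
    dsimp only at h0' hpos' hb' heq'
    have hL' : ∀ i ∉ I, ((G.lapMatrix ℝ).mulVec u') i = 1 := by
      intro i hi
      have := heq' i
      rw [hb' i hi, add_zero, if_pos (hpos' i hi)] at this
      exact this
    have huu : u' = u := by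
      have hz : u' - u = 0 := by
        apply stmt16_dirichlet_unique G hconn I hI
        · intro i hi; simp [h0' i hi, hu0 i hi]
        · intro i hi
          rw [Matrix.mulVec_sub]
          simp [hL' i hi, huL i hi]
      have := sub_eq_zero.mp hz
      exact this
    have hbb : b' = b := by
      funext i
      by_cases hi : i ∈ I
      · have := heq' i
        rw [huu] at this
        have h1 : ¬ 0 < u i := by rw [hu0 i hi]; exact lt_irrefl 0
        rw [if_neg h1] at this
        simp [b, hi]
        linarith
      · rw [hb' i hi]; simp [b, hi]
    rw [Prod.mk.injEq]
    exact ⟨huu, hbb⟩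
end
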